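/- Let M and M' be irreducible ĝ-modules. Then M[d] ≅ M'[d] as t̃g-modules if and only if M ≅ M' as ĝ-modules. -/

import Mathlib

/- Common framework for formalizing statements from
   "Irreducible modules over affine Kac–Moody algebras which are locally finite
    over the positive part" (Guo–Zhao).

   Conventions:
   * `g` is a finite-dimensional simple complex Lie algebra.
   * The loop algebra `g ⊗ ℂ[t,t⁻¹]` is modelled by the vector space `ℤ →₀ g`
     (`Finsupp.single p x` corresponds to `x ⊗ tᵖ`).
   * The affine algebra `ĝ = g ⊗ ℂ[t,t⁻¹] ⊕ ℂK` is any Lie algebra equipped with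
     an `AffineAlg` structure (a linear equivalence with `(ℤ →₀ g) × ℂ` fixing the
     bracket on generators, where `(0,1)` is the central element `K`).
   * Similarly `t̃g = ĝ ⊕ ℂd` is any Lie algebra with an `AffineAlgD` structure on
     `(ℤ →₀ g) × ℂ × ℂ`, where `(0,1,0) = K` and `(0,0,1) = d`.
   * The current algebra `g ⊗ ℂ[t]` is `Polynomial ℂ ⊗[ℂ] g`, and the positive part
     `ñ₊ = (g ⊗ tℂ[t]) ⊕ (n₊ ⊗ 1)` is any Lie algebra `nt` with an `NtAlg` structure:
     an injective Lie algebra morphism into the current algebra with range `ñ₊`.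
   * Induced modules are specified by structures that pin them down uniquely up to
     isomorphism (`IndModule` via the PBW description `ℂ[d] ⊗ M`, and universal
     properties for induction from `ñ₊`).
-/

open scoped TensorProduct
open Polynomial

noncomputable section

namespace AffinePaper

variable (g : Type) [LieRing g] [LieAlgebra ℂ g]

/-- The current algebra `g ⊗ ℂ[t]` is a complex Lie algebra. -/
instance : LieAlgebra ℂ (Polynomial ℂ ⊗[ℂ] g) where
  lie_smul c x y := by
    rw [← algebraMap_smul (Polynomial ℂ) c y, ← algebraMap_smul (Polynomial ℂ) c ⁅x, y⁆]
    exact lie_smul (algebraMap ℂ (Polynomial ℂ) c) x y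

/-- The weight space of `ad H` on `g` for a functional `α` on a subalgebra `H`. -/
def wtSpace (H : LieSubalgebra ℂ g) (α : Module.Dual ℂ H) : Submodule ℂ g where
  carrier := {x : g | ∀ h : H, ⁅(h : g), x⁆ = α h • x}
  add_mem' := fun {a b} ha hb h => by rw [lie_add, ha h, hb h, smul_add]
  zero_mem' := fun h => by rw [lie_zero, smul_zero]
  smul_mem' := fun c x hx h => by rw [lie_smul, hx h]; exact smul_comm c (α h) x

/-- `α` is a root of `(g, H)`. -/
def IsRootOf (H : LieSubalgebra ℂ g) (α : Module.Dual ℂ H) : Prop :=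
  α ≠ 0 ∧ wtSpace g H α ≠ ⊥

/-- A triangular decomposition `g = n₋ ⊕ h ⊕ n₊` of `g` relative to a Cartan
subalgebra `H`, given by a positive system `P` of roots. -/
structure TriangularData where
  H : LieSubalgebra ℂ g
  nPos : LieSubalgebra ℂ g
  nNeg : LieSubalgebra ℂ g
  isCartan : H.IsCartanSubalgebra
  P : Set (Module.Dual ℂ H)
  pos_isRoot : ∀ α ∈ P, IsRootOf g H α
  pos_neg : ∀ α, IsRootOf g H α → (α ∈ P ↔ -α ∉ P)
  nPos_eq : nPos.toSubmodule = ⨆ α ∈ P, wtSpace g H α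
  nNeg_eq : nNeg.toSubmodule = ⨆ α ∈ P, wtSpace g H (-α)
  triang : nNeg.toSubmodule ⊔ H.toSubmodule ⊔ nPos.toSubmodule = ⊤

variable {g}

/-- The simple roots of a positive system: the positive roots that are not sums of
two positive roots. -/
def TriangularData.simpleRoots (D : TriangularData g) : Set (Module.Dual ℂ D.H) :=
  {α | α ∈ D.P ∧ ¬∃ β ∈ D.P, ∃ γ ∈ D.P, α = β + γ}

/-- `θ` is the highest root. -/
def TriangularData.IsHighestRoot (D : TriangularData g) (θ : Module.Dual ℂ D.H) : Prop :=
  θ ∈ D.P ∧ ∀ α ∈ D.P, ¬ IsRootOf g D.H (θ + α)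

/-- `lam ∈ h*` is dominant integral: it takes nonnegative integer values on all
coroots (elements `hc = ⁅e, f⁆ ∈ [g_α, g_{-α}]` with `α hc = 2`, `α` positive). -/
def IsDominantIntegral (D : TriangularData g) (lam : Module.Dual ℂ D.H) : Prop :=
  ∀ α ∈ D.P, ∀ (e f : g) (hc : D.H), e ∈ wtSpace g D.H α → f ∈ wtSpace g D.H (-α) →
    ⁅e, f⁆ = (hc : g) → α hc = 2 → ∃ n : ℕ, lam hc = (n : ℂ)

variable (g)

/-- The subspace `I(f) = n₊ ⊗ f ℂ[t] + (h ⊕ n₋) ⊗ t f ℂ[t]` of the current algebra. -/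
def idealI (D : TriangularData g) (f : Polynomial ℂ) : Submodule ℂ (Polynomial ℂ ⊗[ℂ] g) :=
  Submodule.span ℂ
    ({z | ∃ x ∈ D.nPos, ∃ p : Polynomial ℂ, z = (f * p) ⊗ₜ[ℂ] x} ∪
     {z | ∃ x : g, x ∈ D.H.toSubmodule ⊔ D.nNeg.toSubmodule ∧
        ∃ p : Polynomial ℂ, z = (X * f * p) ⊗ₜ[ℂ] x})

/-- The subspace `Σ_{α∈Δ₊∖Π} g_α ⊗ fℂ[t] + Σ_{α∈Π} g_α ⊗ tfℂ[t] +
Σ_{α∈Δ₊∖{θ}} g_{−α} ⊗ tfℂ[t] + g_{−θ} ⊗ t²fℂ[t] + h ⊗ tfℂ[t]` of the current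
algebra (`θ` the highest root); for `f = 1` this is the subspace `K` of Lemma 4.2. -/
def bigK (D : TriangularData g) (θ : Module.Dual ℂ D.H) (f : Polynomial ℂ) :
    Submodule ℂ (Polynomial ℂ ⊗[ℂ] g) :=
  Submodule.span ℂ
    ({z | ∃ α ∈ D.P, α ∉ D.simpleRoots ∧
        ∃ x ∈ wtSpace g D.H α, ∃ p : Polynomial ℂ, z = (f * p) ⊗ₜ[ℂ] x} ∪
     {z | ∃ α ∈ D.simpleRoots,
        ∃ x ∈ wtSpace g D.H α, ∃ p : Polynomial ℂ, z = (X * f * p) ⊗ₜ[ℂ] x} ∪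
     {z | ∃ α ∈ D.P, α ≠ θ ∧
        ∃ x ∈ wtSpace g D.H (-α), ∃ p : Polynomial ℂ, z = (X * f * p) ⊗ₜ[ℂ] x} ∪
     {z | ∃ x ∈ wtSpace g D.H (-θ), ∃ p : Polynomial ℂ, z = (X ^ 2 * f * p) ⊗ₜ[ℂ] x} ∪
     {z | ∃ x ∈ D.H, ∃ p : Polynomial ℂ, z = (X * f * p) ⊗ₜ[ℂ] x})

/-- The subspace of the current algebra corresponding to
`ñ₊ = (g ⊗ tℂ[t]) ⊕ (n₊ ⊗ 1)`. -/
def ntModel (D : TriangularData g) : Submodule ℂ (Polynomial ℂ ⊗[ℂ] g) :=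
  Submodule.span ℂ
    ({z | ∃ (k : ℕ) (x : g), 1 ≤ k ∧ z = (X ^ k : Polynomial ℂ) ⊗ₜ[ℂ] x} ∪
     {z | ∃ x ∈ D.nPos, z = (1 : Polynomial ℂ) ⊗ₜ[ℂ] x})

/-- A realization of the Lie algebra `ñ₊`: a Lie algebra `nt` together with an
injective morphism to the current algebra with range `(g ⊗ tℂ[t]) ⊕ (n₊ ⊗ 1)`. -/
structure NtAlg (D : TriangularData g) (nt : Type) [LieRing nt] [LieAlgebra ℂ nt] where
  ι : nt →ₗ⁅ℂ⁆ Polynomial ℂ ⊗[ℂ] g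
  inj : Function.Injective ι
  range_eq : LinearMap.range (ι.toLinearMap) = ntModel g D

/-- Evaluation of the current algebra at a point `a ∈ ℂ`: `x ⊗ p(t) ↦ p(a) • x`. -/
def ev (a : ℂ) : (Polynomial ℂ ⊗[ℂ] g) →ₗ[ℂ] g :=
  (TensorProduct.lid ℂ g).toLinearMap ∘ₗ
    (TensorProduct.map (Polynomial.aeval a).toLinearMap LinearMap.id)

/-- The canonical embedding of the current algebra `g ⊗ ℂ[t]` into the model
`ℤ →₀ g` of the loop algebra `g ⊗ ℂ[t,t⁻¹]` (sending `x ⊗ tᵏ` to `single k x`). -/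
def toLoop : (Polynomial ℂ ⊗[ℂ] g) →ₗ[ℂ] (ℤ →₀ g) :=
  (Finsupp.lmapDomain g ℂ (Nat.cast : ℕ → ℤ)) ∘ₗ
    (TensorProduct.finsuppScalarLeft ℂ g ℕ).toLinearMap ∘ₗ
    (TensorProduct.congr ((Polynomial.toFinsuppIsoAlg ℂ).toLinearEquiv.trans
      (AddMonoidAlgebra.coeffLinearEquiv ℂ))
      (LinearEquiv.refl ℂ g)).toLinearMap

/-- A weight vector of `ñ₊` (viewed inside the current algebra): a nonzero element
`x ⊗ tᵏ` with `x` in `h` or in a root space. -/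
def IsWeightVec (D : TriangularData g) (w : Polynomial ℂ ⊗[ℂ] g) : Prop :=
  w ≠ 0 ∧ ∃ (k : ℕ) (x : g), w = (X ^ k : Polynomial ℂ) ⊗ₜ[ℂ] x ∧
    (x ∈ D.H ∨ ∃ α, IsRootOf g D.H α ∧ x ∈ wtSpace g D.H α)

/-- An element `z` of a Lie algebra `L` acts locally finitely on a module `V`. -/
def ActsLocallyFinitely (L : Type) [LieRing L] (V : Type) [AddCommGroup V] [Module ℂ V]
    [LieRingModule L V] (z : L) : Prop :=
  ∀ v : V, ∃ W : Submodule ℂ V, v ∈ W ∧ FiniteDimensional ℂ W ∧ ∀ w ∈ W, ⁅z, w⁆ ∈ W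

/-- A realization of the affine Lie algebra `ĝ = (g ⊗ ℂ[t,t⁻¹]) ⊕ ℂK` (without
derivation): a Lie algebra `gh` with a linear equivalence `e` with the model space
`(ℤ →₀ g) × ℂ` such that `e (single p x, 0) = x ⊗ tᵖ`, `e (0,1) = K` is central, and
`[x ⊗ tᵖ, y ⊗ t^q] = [x,y] ⊗ t^{p+q} + p δ_{p+q,0} κ(x,y) K`, `κ` the Killing form. -/
structure AffineAlg (gh : Type) [LieRing gh] [LieAlgebra ℂ gh] where
  e : ((ℤ →₀ g) × ℂ) ≃ₗ[ℂ] gh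
  brkt : ∀ (p q : ℤ) (x y : g),
    ⁅e (Finsupp.single p x, 0), e (Finsupp.single q y, 0)⁆ =
      e (Finsupp.single (p + q) ⁅x, y⁆,
        if p + q = 0 then (p : ℂ) * killingForm ℂ g x y else 0)
  central : ∀ z : gh, ⁅e (0, 1), z⁆ = 0

/-- A realization of the affine Kac–Moody algebra `t̃g = (g ⊗ ℂ[t,t⁻¹]) ⊕ ℂK ⊕ ℂd`:
as in `AffineAlg`, with moreover `e (0,0,1) = d` satisfying `[d, x ⊗ tᵖ] = p x ⊗ tᵖ`. -/
structure AffineAlgD (gt : Type) [LieRing gt] [LieAlgebra ℂ gt] where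
  e : ((ℤ →₀ g) × ℂ × ℂ) ≃ₗ[ℂ] gt
  brkt : ∀ (p q : ℤ) (x y : g),
    ⁅e (Finsupp.single p x, 0, 0), e (Finsupp.single q y, 0, 0)⁆ =
      e (Finsupp.single (p + q) ⁅x, y⁆,
        (if p + q = 0 then (p : ℂ) * killingForm ℂ g x y else 0), 0)
  central : ∀ z : gt, ⁅e (0, 1, 0), z⁆ = 0
  dBrkt : ∀ (p : ℤ) (x : g),
    ⁅e (0, 0, 1), e (Finsupp.single p x, 0, 0)⁆ = e (Finsupp.single p ((p : ℂ) • x), 0, 0)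

variable {g}

/-- `V` is the irreducible highest weight `g`-module with highest weight `lam`:
it is irreducible and has a highest weight vector of weight `lam`. -/
structure IsHWModule (D : TriangularData g) (lam : Module.Dual ℂ D.H) (V : Type)
    [AddCommGroup V] [Module ℂ V] [LieRingModule g V] [LieModule ℂ g V] where
  v₀ : V
  ne : v₀ ≠ 0
  hwN : ∀ x ∈ D.nPos, ⁅x, v₀⁆ = 0
  hwH : ∀ h : D.H, ⁅(h : g), v₀⁆ = lam h • v₀
  irred : IsSimpleOrder (LieSubmodule ℂ g V)

/-- `E` is the evaluation module `E(λ, a) = V₁ ⊗ ⋯ ⊗ V_m` over `ĝ`: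
`(x ⊗ tᵏ) · (v₁ ⊗ ⋯ ⊗ v_m) = Σᵢ aᵢᵏ v₁ ⊗ ⋯ ⊗ (x · vᵢ) ⊗ ⋯ ⊗ v_m`, and `K` acts by `0`. -/
structure EvalModule {gh : Type} [LieRing gh] [LieAlgebra ℂ gh] (A : AffineAlg g gh)
    {m : ℕ} (a : Fin m → ℂ) (V : Fin m → Type) [∀ i, AddCommGroup (V i)]
    [∀ i, Module ℂ (V i)] [∀ i, LieRingModule g (V i)] [∀ i, LieModule ℂ g (V i)]
    (E : Type) [AddCommGroup E] [Module ℂ E] [LieRingModule gh E] [LieModule ℂ gh E] where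
  ψ : E ≃ₗ[ℂ] PiTensorProduct ℂ V
  act : ∀ (k : ℤ) (x : g) (v : ∀ i, V i),
    ⁅A.e (Finsupp.single k x, 0), ψ.symm (PiTensorProduct.tprod ℂ v)⁆ =
      ∑ i, (a i) ^ k • ψ.symm (PiTensorProduct.tprod ℂ (Function.update v i ⁅x, v i⁆))
  kAct : ∀ w : E, ⁅A.e (0, 1), w⁆ = 0

/-- `V` is the `t̃g`-module `M[d] = Ind_{ĝ}^{t̃g} M` induced from a `ĝ`-module `M`.
As a vector space `M[d] = ℂ[d] ⊗ M` (modelled by `ℕ →₀ M`, `single n v = dⁿ ⊗ v`);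
`d` shifts the degree and `ĝ` acts on `d⁰ ⊗ M` as on `M`.  These data determine the
`t̃g`-module structure uniquely. -/
structure IndModule {gh gt : Type} [LieRing gh] [LieAlgebra ℂ gh] [LieRing gt]
    [LieAlgebra ℂ gt] (T : AffineAlgD g gt) (A : AffineAlg g gh)
    (M : Type) [AddCommGroup M] [Module ℂ M] [LieRingModule gh M]
    (V : Type) [AddCommGroup V] [Module ℂ V] [LieRingModule gt V] where
  φ : (ℕ →₀ M) ≃ₗ[ℂ] V
  dAct : ∀ (n : ℕ) (v : M),
    ⁅T.e (0, 0, 1), φ (Finsupp.single n v)⁆ = φ (Finsupp.single (n + 1) v)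
  rest : ∀ (u : (ℤ →₀ g) × ℂ) (v : M),
    ⁅T.e (u.1, u.2, 0), φ (Finsupp.single 0 v)⁆ = φ (Finsupp.single 0 ⁅A.e u, v⁆)

attribute [local instance 100] LieRing.ofAssociativeRing

/-- `S` is the `ñ₊`-module `S(η, λ, a) = ℂ v_η ⊗ L(λ₁) ⊗ ⋯ ⊗ L(λ_m)`:
`(x ⊗ p(t)) · (v₁ ⊗ ⋯ ⊗ v_m) = η(x ⊗ p(t)) (v₁ ⊗ ⋯ ⊗ v_m) + Σᵢ p(aᵢ) v₁ ⊗ ⋯ ⊗ (x vᵢ) ⊗ ⋯ ⊗ v_m`. -/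
structure SModule {nt : Type} [LieRing nt] [LieAlgebra ℂ nt] {D : TriangularData g}
    (NT : NtAlg g D nt) (η : nt →ₗ⁅ℂ⁆ ℂ) {m : ℕ} (a : Fin m → ℂ)
    (V : Fin m → Type) [∀ i, AddCommGroup (V i)] [∀ i, Module ℂ (V i)]
    [∀ i, LieRingModule g (V i)]
    (S : Type) [AddCommGroup S] [Module ℂ S] [LieRingModule nt S] where
  ψ : S ≃ₗ[ℂ] PiTensorProduct ℂ V
  act : ∀ (z : nt) (v : ∀ i, V i),
    ⁅z, ψ.symm (PiTensorProduct.tprod ℂ v)⁆ = η z • ψ.symm (PiTensorProduct.tprod ℂ v) +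
      ∑ i, ψ.symm (PiTensorProduct.tprod ℂ (Function.update v i ⁅ev g (a i) (NT.ι z), v i⁆))

/-- `V` is the irreducible highest weight `ĝ`-module with highest weight
`γ ∈ (h ⊕ ℂK)*`. -/
structure HWModuleAff {gh : Type} [LieRing gh] [LieAlgebra ℂ gh] (A : AffineAlg g gh)
    (D : TriangularData g) (γ : Module.Dual ℂ (↥D.H × ℂ)) (V : Type)
    [AddCommGroup V] [Module ℂ V] [LieRingModule gh V] [LieModule ℂ gh V] where
  v₀ : V
  ne : v₀ ≠ 0
  hwLoop : ∀ k : ℕ, 1 ≤ k → ∀ x : g, ⁅A.e (Finsupp.single (k : ℤ) x, 0), v₀⁆ = 0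
  hwN : ∀ x ∈ D.nPos, ⁅A.e (Finsupp.single 0 x, 0), v₀⁆ = 0
  hwH : ∀ (h : D.H) (c : ℂ), ⁅A.e (Finsupp.single 0 (h : g), c), v₀⁆ = γ (h, c) • v₀
  irred : IsSimpleOrder (LieSubmodule ℂ gh V)

/-- `W` is an irreducible Whittaker `ĝ`-module of type `η : ñ₊ → ℂ`. -/
structure WhittakerAff {gh : Type} [LieRing gh] [LieAlgebra ℂ gh] (A : AffineAlg g gh)
    {D : TriangularData g} {nt : Type} [LieRing nt] [LieAlgebra ℂ nt] (NT : NtAlg g D nt)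
    (η : nt →ₗ⁅ℂ⁆ ℂ) (W : Type)
    [AddCommGroup W] [Module ℂ W] [LieRingModule gh W] [LieModule ℂ gh W] where
  v₀ : W
  ne : v₀ ≠ 0
  wh : ∀ z : nt, ⁅A.e (toLoop g (NT.ι z), 0), v₀⁆ = η z • v₀
  irred : IsSimpleOrder (LieSubmodule ℂ gh W)

/-- `MS` is the induced `ĝ`-module `Ind_{ñ₊}^{ĝ} S`, characterized by its universal
property. -/
structure IndFromNt {gh : Type} [LieRing gh] [LieAlgebra ℂ gh] (A : AffineAlg g gh)
    {D : TriangularData g} {nt : Type} [LieRing nt] [LieAlgebra ℂ nt] (NT : NtAlg g D nt)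
    (S : Type) [AddCommGroup S] [Module ℂ S] [LieRingModule nt S]
    (MS : Type) [AddCommGroup MS] [Module ℂ MS] [LieRingModule gh MS]
    [LieModule ℂ gh MS] where
  ι₀ : S →ₗ[ℂ] MS
  compat : ∀ (z : nt) (s : S), ⁅A.e (toLoop g (NT.ι z), 0), ι₀ s⁆ = ι₀ ⁅z, s⁆
  univ : ∀ (W : Type) [AddCommGroup W] [Module ℂ W] [LieRingModule gh W]
    [LieModule ℂ gh W] (f : S →ₗ[ℂ] W),
    (∀ (z : nt) (s : S), ⁅A.e (toLoop g (NT.ι z), 0), f s⁆ = f ⁅z, s⁆) →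
    ∃! F : MS →ₗ⁅ℂ,gh⁆ W, F.toLinearMap ∘ₗ ι₀ = f

/-- `M0` is the universal Whittaker module `M(η) = Ind_{ñ₊}^{ĝ} ℂ_η`, characterized
by its universal property. -/
structure UnivWhittaker {gh : Type} [LieRing gh] [LieAlgebra ℂ gh] (A : AffineAlg g gh)
    {D : TriangularData g} {nt : Type} [LieRing nt] [LieAlgebra ℂ nt] (NT : NtAlg g D nt)
    (η : nt →ₗ⁅ℂ⁆ ℂ) (M0 : Type) [AddCommGroup M0] [Module ℂ M0] [LieRingModule gh M0]
    [LieModule ℂ gh M0] where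
  u₀ : M0
  rel : ∀ z : nt, ⁅A.e (toLoop g (NT.ι z), 0), u₀⁆ = η z • u₀
  univ : ∀ (W : Type) [AddCommGroup W] [Module ℂ W] [LieRingModule gh W]
    [LieModule ℂ gh W] (w : W),
    (∀ z : nt, ⁅A.e (toLoop g (NT.ι z), 0), w⁆ = η z • w) →
    ∃! F : M0 →ₗ⁅ℂ,gh⁆ W, F u₀ = w

variable (g)

/-- A bundled Lie module over a complex Lie algebra `L`. -/
structure LieModOf (L : Type) [LieRing L] [LieAlgebra ℂ L] : Type 1 where
  carrier : Type
  [ac : AddCommGroup carrier]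
  [mo : Module ℂ carrier]
  [lrm : LieRingModule L carrier]
  [lm : LieModule ℂ L carrier]

attribute [instance] LieModOf.ac LieModOf.mo LieModOf.lrm LieModOf.lm

/-!
`M[d] = ℂ[d] ⊗ M` is filtered by the degree in `d`. Since `⁅ĝ, d⁆ ⊆ ĝ`, the relation
`dⁿ⁺¹ ⊗ v = ⁅d, dⁿ ⊗ v⁆` shows inductively that `ĝ` preserves this filtration and acts on the
top coefficient exactly as on `M`.

The same induction shows that a linear map between two induced modules that commutes with `d`
and with `ĝ` on `d⁰ ⊗ M` commutes with all of `t̃g`; so `M ≅ M'` gives `M[d] ≅ M'[d]`.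

Conversely, let `G : M[d] ≅ M'[d]` and let `n` be the degree of `G (1 ⊗ v₀)` for some `v₀ ≠ 0`.
The vectors `v` with `G (1 ⊗ v)` of degree `≤ n` form a nonzero `ĝ`-submodule of `M`, hence all
of `M`, and taking the coefficient of `dⁿ` is then a nonzero `ĝ`-map `M → M'`, an isomorphism by
Schur's lemma.
-/

end AffinePaper

section LieModule

variable {R L M N : Type*} [CommRing R] [LieRing L]
  [AddCommGroup M] [Module R M] [LieRingModule L M]
  [AddCommGroup N] [Module R N] [LieRingModule L N]

theorem LieModuleHom.bijective_of_isSimpleOrder [IsSimpleOrder (LieSubmodule R L M)]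
    [IsSimpleOrder (LieSubmodule R L N)] {f : M →ₗ⁅R,L⁆ N} (hf : f ≠ 0) :
    Function.Bijective f := by
  refine ⟨(f.ker_eq_bot).1 ?_, (f.range_eq_top).1 ?_⟩
  · refine (eq_bot_or_eq_top f.ker).resolve_right fun h => hf ?_
    ext m
    exact f.mem_ker.1 (h ▸ LieSubmodule.mem_top m)
  · refine (eq_bot_or_eq_top f.range).resolve_left fun h => hf ?_
    ext m
    have hm : f m ∈ f.range := (f.mem_range _).2 ⟨m, rfl⟩
    rwa [h, LieSubmodule.mem_bot] at hm

def LieModuleEquiv.ofBijective (f : M →ₗ⁅R,L⁆ N) (hf : Function.Bijective f) :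
    M ≃ₗ⁅R,L⁆ N :=
  { f, LinearEquiv.ofBijective (f : M →ₗ[R] N) hf with }

theorem LinearMap.map_lie_lie_of_map_lie {F : M →ₗ[R] N} {K : Set L} {d : L}
    (hK : ∀ x ∈ K, ⁅x, d⁆ ∈ K) (hd : ∀ m, F ⁅d, m⁆ = ⁅d, F m⁆) {m : M}
    (hm : ∀ x ∈ K, F ⁅x, m⁆ = ⁅x, F m⁆) {x : L} (hx : x ∈ K) :
    F ⁅x, ⁅d, m⁆⁆ = ⁅x, F ⁅d, m⁆⁆ := by
  rw [leibniz_lie, map_add, hm _ (hK x hx), hd, hm x hx, hd]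
  exact (leibniz_lie x d (F m)).symm

end LieModule

namespace AffinePaper

variable {g gh gt : Type} [LieRing g] [LieAlgebra ℂ g] [LieRing gh] [LieAlgebra ℂ gh]
  [LieRing gt] [LieAlgebra ℂ gt]

namespace AffineAlgD

variable (T : AffineAlgD g gt)

/-- `(w, c) ↦ w + c • K`: the copy of `ĝ` inside `t̃g`. -/
def ofLoopK : (ℤ →₀ g) × ℂ →ₗ[ℂ] gt :=
  T.e.toLinearMap ∘ₗ LinearMap.id.prodMap (LinearMap.inl ℂ ℂ ℂ)

@[simp]
theorem ofLoopK_apply (u : (ℤ →₀ g) × ℂ) : T.ofLoopK u = T.e (u.1, u.2, 0) := rfl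

theorem lie_d_ofLoopK_mem_range (u : (ℤ →₀ g) × ℂ) :
    ⁅T.e (0, 0, 1), T.ofLoopK u⁆ ∈ LinearMap.range T.ofLoopK := by
  obtain ⟨w, c⟩ := u
  have hK : ⁅T.e (0, 0, 1), T.ofLoopK (0, c)⁆ = 0 := by
    have : T.ofLoopK (0, c) = c • T.e (0, 1, 0) := by simp [← map_smul]
    rw [this, lie_smul, ← lie_skew, T.central, neg_zero, smul_zero]
  have hloop : ⁅T.e (0, 0, 1), T.ofLoopK (w, 0)⁆ ∈ LinearMap.range T.ofLoopK := by
    induction w using Finsupp.induction_linear with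
    | zero => simp only [Prod.mk_zero_zero, map_zero, lie_zero, zero_mem]
    | add w₁ w₂ h₁ h₂ =>
      rw [show ((w₁ + w₂, 0) : (ℤ →₀ g) × ℂ) = (w₁, 0) + (w₂, 0) by simp, map_add, lie_add]
      exact add_mem h₁ h₂
    | single p x => exact ⟨(Finsupp.single p ((p : ℂ) • x), 0), (T.dBrkt p x).symm⟩
  rw [← add_zero w, ← zero_add c, ← Prod.mk_add_mk, map_add, lie_add, hK, add_zero]
  exact hloop

theorem lie_ofLoopK_d_mem_range :
    ∀ x ∈ LinearMap.range T.ofLoopK, ⁅x, T.e (0, 0, 1)⁆ ∈ LinearMap.range T.ofLoopK := by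
  rintro _ ⟨u, rfl⟩
  rw [← lie_skew]
  exact neg_mem (T.lie_d_ofLoopK_mem_range u)

theorem eq_ofLoopK_add_smul_d (z : gt) :
    z = T.ofLoopK ((T.e.symm z).1, (T.e.symm z).2.1) + (T.e.symm z).2.2 • T.e (0, 0, 1) := by
  conv_lhs => rw [← T.e.apply_symm_apply z]
  rw [ofLoopK_apply, ← map_smul, ← map_add]
  simp

end AffineAlgD

namespace IndModule

open Finsupp

variable {T : AffineAlgD g gt} {A : AffineAlg g gh} {M M' V V' : Type}
  [AddCommGroup M] [Module ℂ M] [LieRingModule gh M]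
  [AddCommGroup M'] [Module ℂ M'] [LieRingModule gh M']
  [AddCommGroup V'] [Module ℂ V'] [LieRingModule gt V'] [LieModule ℂ gt V']

section

variable [AddCommGroup V] [Module ℂ V] [LieRingModule gt V] [LieModule ℂ gt V]

theorem lie_d_apply (h : IndModule T A M V) (w : ℕ →₀ M) :
    ⁅T.e (0, 0, 1), h.φ w⁆ = h.φ (lmapDomain M ℂ (· + 1) w) := by
  have key : LieModule.toEnd ℂ gt V (T.e (0, 0, 1)) ∘ₗ h.φ.toLinearMap =
      h.φ.toLinearMap ∘ₗ lmapDomain M ℂ (· + 1) :=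
    lhom_ext fun n v => by simpa using h.dAct n v
  exact LinearMap.congr_fun key w

theorem symm_trans_map_lie (h : IndModule T A M V) (h' : IndModule T A M V') (z : gt) (y : V) :
    h.φ.symm.trans h'.φ ⁅z, y⁆ = ⁅z, h.φ.symm.trans h'.φ y⁆ := by
  set F := (h.φ.symm.trans h'.φ).toLinearMap
  have hF : ∀ w, F (h.φ w) = h'.φ w := fun w => by simp [F]
  have hd : ∀ y, F ⁅T.e (0, 0, 1), y⁆ = ⁅T.e (0, 0, 1), F y⁆ := fun y => by
    rw [← h.φ.apply_symm_apply y, h.lie_d_apply, hF, hF, h'.lie_d_apply]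
  have hsingle : ∀ n v, ∀ x ∈ LinearMap.range T.ofLoopK,
      F ⁅x, h.φ (single n v)⁆ = ⁅x, F (h.φ (single n v))⁆ := by
    intro n v
    induction n with
    | zero =>
      rintro _ ⟨u, rfl⟩
      rw [T.ofLoopK_apply, h.rest, hF, hF, h'.rest]
    | succ n ih =>
      intro x hx
      rw [← h.dAct]
      exact F.map_lie_lie_of_map_lie T.lie_ofLoopK_d_mem_range hd ih hx
  have hloop : ∀ x ∈ LinearMap.range T.ofLoopK, ∀ y, F ⁅x, y⁆ = ⁅x, F y⁆ := by
    intro x hx y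
    have key : F ∘ₗ LieModule.toEnd ℂ gt V x ∘ₗ h.φ.toLinearMap =
        LieModule.toEnd ℂ gt V' x ∘ₗ F ∘ₗ h.φ.toLinearMap :=
      lhom_ext fun n v => hsingle n v x hx
    simpa using LinearMap.congr_fun key (h.φ.symm y)
  show F ⁅z, y⁆ = ⁅z, F y⁆
  rw [T.eq_ofLoopK_add_smul_d z, add_lie, smul_lie, map_add, map_smul,
    hloop _ (LinearMap.mem_range_self _ _), hd, add_lie, smul_lie]

def lieModuleEquiv (h : IndModule T A M V) (h' : IndModule T A M V') : V ≃ₗ⁅ℂ,gt⁆ V' :=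
  { h.φ.symm.trans h'.φ with map_lie' := h.symm_trans_map_lie h' _ _ }

def loopAct (h : IndModule T A M V) (u : (ℤ →₀ g) × ℂ) : (ℕ →₀ M) →ₗ[ℂ] ℕ →₀ M :=
  h.φ.symm.toLinearMap ∘ₗ LieModule.toEnd ℂ gt V (T.ofLoopK u) ∘ₗ h.φ.toLinearMap

theorem loopAct_apply (h : IndModule T A M V) (u : (ℤ →₀ g) × ℂ) (x : ℕ →₀ M) :
    h.loopAct u x = h.φ.symm ⁅T.ofLoopK u, h.φ x⁆ := rfl

theorem loopAct_single_sub_single_mem (h : IndModule T A M V) (n : ℕ) (u : (ℤ →₀ g) × ℂ)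
    (v : M) :
    h.loopAct u (single n v) - single n ⁅A.e u, v⁆ ∈ supported M ℂ (Set.Iio n) := by
  induction n generalizing u with
  | zero =>
    rw [loopAct_apply, T.ofLoopK_apply, h.rest, LinearEquiv.symm_apply_apply, sub_self]
    exact zero_mem _
  | succ n ih =>
    obtain ⟨u', hu'⟩ := T.lie_ofLoopK_d_mem_range _ (LinearMap.mem_range_self _ u)
    have hshift : h.loopAct u (single (n + 1) v) =
        h.loopAct u' (single n v) + lmapDomain M ℂ (· + 1) (h.loopAct u (single n v)) := by
      rw [loopAct_apply, ← h.dAct, leibniz_lie, ← hu', loopAct_apply,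
        ← h.φ.apply_symm_apply ⁅T.ofLoopK u, h.φ (single n v)⁆, h.lie_d_apply, map_add,
        LinearEquiv.symm_apply_apply]
      rfl
    have hlow : supported M ℂ (Set.Iio n) ≤ supported M ℂ (Set.Iio (n + 1)) :=
      supported_mono (Set.Iio_subset_Iio n.le_succ)
    have hu'_mem : h.loopAct u' (single n v) ∈ supported M ℂ (Set.Iio (n + 1)) := by
      rw [← sub_add_cancel (h.loopAct u' (single n v)) (single n ⁅A.e u', v⁆)]
      exact add_mem (hlow (ih u')) (single_mem_supported ℂ _ n.lt_succ_self)
    have hpre : (· + 1) ⁻¹' Set.Iio (n + 1) = Set.Iio n := by ext; simp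
    have hshift_mem := supported_comap_lmapDomain M ℂ (· + 1) (Set.Iio (n + 1)) (hpre ▸ ih u)
    simp only [Submodule.mem_comap, map_sub, lmapDomain_apply, mapDomain_single] at hshift_mem
    rw [hshift, lmapDomain_apply, add_sub_assoc]
    exact add_mem hu'_mem hshift_mem

theorem loopAct_mem_supported_Iio (h : IndModule T A M V) {n : ℕ} (u : (ℤ →₀ g) × ℂ)
    {x : ℕ →₀ M} (hx : x ∈ supported M ℂ (Set.Iio n)) :
    h.loopAct u x ∈ supported M ℂ (Set.Iio n) := by
  rw [← sum_single x, map_finsuppSum]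
  refine Submodule.sum_mem _ fun k hk => ?_
  have hkn : k < n := hx hk
  show h.loopAct u (single k (x k)) ∈ _
  rw [← sub_add_cancel (h.loopAct u (single k (x k))) (single k ⁅A.e u, x k⁆)]
  exact add_mem
    (supported_mono (Set.Iio_subset_Iio hkn.le) (h.loopAct_single_sub_single_mem k u _))
    (single_mem_supported ℂ _ hkn)

theorem loopAct_sub_single_mem (h : IndModule T A M V) {n : ℕ} (u : (ℤ →₀ g) × ℂ)
    {x : ℕ →₀ M} (hx : x ∈ supported M ℂ (Set.Iic n)) :
    h.loopAct u x - single n ⁅A.e u, x n⁆ ∈ supported M ℂ (Set.Iio n) := by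
  classical
  have herase : x.erase n ∈ supported M ℂ (Set.Iio n) := fun k hk => by
    rw [Finset.mem_coe, Finsupp.support_erase, Finset.mem_erase] at hk
    exact lt_of_le_of_ne (hx hk.2) hk.1
  have hsplit : h.loopAct u x = h.loopAct u (single n (x n)) + h.loopAct u (x.erase n) := by
    rw [← map_add, single_add_erase]
  rw [hsplit, add_sub_right_comm]
  exact add_mem (h.loopAct_single_sub_single_mem n u (x n))
    (h.loopAct_mem_supported_Iio u herase)

theorem loopAct_mem_supported_Iic (h : IndModule T A M V) {n : ℕ} (u : (ℤ →₀ g) × ℂ)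
    {x : ℕ →₀ M} (hx : x ∈ supported M ℂ (Set.Iic n)) :
    h.loopAct u x ∈ supported M ℂ (Set.Iic n) := by
  rw [← sub_add_cancel (h.loopAct u x) (single n ⁅A.e u, x n⁆)]
  exact add_mem (supported_mono Set.Iio_subset_Iic_self (h.loopAct_sub_single_mem u hx))
    (single_mem_supported ℂ _ (Set.mem_Iic.2 le_rfl))

theorem loopAct_apply_self (h : IndModule T A M V) {n : ℕ} (u : (ℤ →₀ g) × ℂ)
    {x : ℕ →₀ M} (hx : x ∈ supported M ℂ (Set.Iic n)) : h.loopAct u x n = ⁅A.e u, x n⁆ := by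
  have := (mem_supported' ℂ _).1 (h.loopAct_sub_single_mem u hx) n (lt_irrefl n)
  rwa [Finsupp.sub_apply, single_eq_same, sub_eq_zero] at this

variable {N : Type} [AddCommGroup N] [Module ℂ N] [LieRingModule gh N]

def comapSupportedIic (h : IndModule T A M V) (f : N →ₗ[ℂ] ℕ →₀ M)
    (hf : ∀ z v, f ⁅z, v⁆ = h.loopAct (A.e.symm z) (f v)) (n : ℕ) : LieSubmodule ℂ gh N :=
  { (supported M ℂ (Set.Iic n)).comap f with
    lie_mem := fun {z v} hv => by
      show f ⁅z, v⁆ ∈ supported M ℂ (Set.Iic n)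
      rw [hf]
      exact h.loopAct_mem_supported_Iic _ hv }

def coeffLieHom (h : IndModule T A M V) (f : N →ₗ[ℂ] ℕ →₀ M)
    (hf : ∀ z v, f ⁅z, v⁆ = h.loopAct (A.e.symm z) (f v)) (n : ℕ)
    (hn : ∀ v, f v ∈ supported M ℂ (Set.Iic n)) : N →ₗ⁅ℂ,gh⁆ M :=
  { lapply n ∘ₗ f with
    map_lie' := fun {z v} => by
      simp only [LinearMap.toFun_eq_coe, LinearMap.coe_comp, Function.comp_apply, lapply_apply,
        hf, h.loopAct_apply_self _ (hn v), LinearEquiv.apply_symm_apply] }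

theorem nonempty_lieModuleEquiv_of_map_lie [IsSimpleOrder (LieSubmodule ℂ gh N)]
    [IsSimpleOrder (LieSubmodule ℂ gh M)] (h : IndModule T A M V) (f : N →ₗ[ℂ] ℕ →₀ M)
    (hf : ∀ z v, f ⁅z, v⁆ = h.loopAct (A.e.symm z) (f v)) (hf0 : f ≠ 0) :
    Nonempty (N ≃ₗ⁅ℂ,gh⁆ M) := by
  obtain ⟨v₀, hv₀⟩ : ∃ v, f v ≠ 0 := by
    by_contra! hzero
    exact hf0 (LinearMap.ext hzero)
  set n := (f v₀).support.max' (support_nonempty_iff.2 hv₀)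
  have hmem : v₀ ∈ h.comapSupportedIic f hf n := fun k hk => Finset.le_max' _ k hk
  have htop : h.comapSupportedIic f hf n = ⊤ := by
    refine (eq_bot_or_eq_top _).resolve_left fun hbot => hv₀ ?_
    rw [hbot, LieSubmodule.mem_bot] at hmem
    rw [hmem, map_zero]
  have hn : ∀ v, f v ∈ supported M ℂ (Set.Iic n) := fun v =>
    (htop ▸ LieSubmodule.mem_top v : v ∈ h.comapSupportedIic f hf n)
  have hθ : h.coeffLieHom f hf n hn ≠ 0 := fun hzero =>
    mem_support_iff.1 (Finset.max'_mem _ _) (LieModuleHom.congr_fun hzero v₀)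
  exact ⟨.ofBijective _ (LieModuleHom.bijective_of_isSimpleOrder hθ)⟩

end

def ofLieModuleEquiv [AddCommGroup V] [Module ℂ V] [LieRingModule gt V]
    (h' : IndModule T A M' V) (E : M ≃ₗ⁅ℂ,gh⁆ M') : IndModule T A M V where
  φ := (mapRange.linearEquiv E.toLinearEquiv).trans h'.φ
  dAct n v := by simpa using h'.dAct n (E v)
  rest u v := by
    have hE : E ⁅A.e u, v⁆ = ⁅A.e u, E v⁆ := E.map_lie'
    simpa [hE] using h'.rest u (E v)

theorem nonempty_lieModuleEquiv_of_lieModuleEquiv [AddCommGroup V] [Module ℂ V]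
    [LieRingModule gt V] [IsSimpleOrder (LieSubmodule ℂ gh M)]
    [IsSimpleOrder (LieSubmodule ℂ gh M')] (h : IndModule T A M V) (h' : IndModule T A M' V')
    (G : V ≃ₗ⁅ℂ,gt⁆ V') : Nonempty (M ≃ₗ⁅ℂ,gh⁆ M') := by
  set f : M →ₗ[ℂ] ℕ →₀ M' :=
    h'.φ.symm.toLinearMap ∘ₗ G.toLinearEquiv.toLinearMap ∘ₗ h.φ.toLinearMap ∘ₗ lsingle 0
  have hf : ∀ z v, f ⁅z, v⁆ = h'.loopAct (A.e.symm z) (f v) := fun z v => by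
    have hrest := h.rest (A.e.symm z) v
    rw [A.e.apply_symm_apply] at hrest
    show h'.φ.symm (G (h.φ (single 0 ⁅z, v⁆))) =
      h'.φ.symm ⁅T.ofLoopK (A.e.symm z), h'.φ (h'.φ.symm (G (h.φ (single 0 v))))⁆
    rw [LinearEquiv.apply_symm_apply, ← hrest]
    exact congrArg h'.φ.symm G.map_lie'
  have hf0 : f ≠ 0 := by
    have := (LieSubmodule.nontrivial_iff ℂ gh M).1 inferInstance
    obtain ⟨v, hv⟩ := exists_ne (0 : M)
    exact fun hzero => hv (by simpa [f] using LinearMap.congr_fun hzero v)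
  exact h'.nonempty_lieModuleEquiv_of_map_lie f hf hf0

end IndModule

theorem statement16_general (g : Type) [LieRing g] [LieAlgebra ℂ g]
    (gh : Type) [LieRing gh] [LieAlgebra ℂ gh] (A : AffineAlg g gh)
    (gt : Type) [LieRing gt] [LieAlgebra ℂ gt] (T : AffineAlgD g gt)
    (M : Type) [AddCommGroup M] [Module ℂ M] [LieRingModule gh M]
    (M' : Type) [AddCommGroup M'] [Module ℂ M'] [LieRingModule gh M']
    (hM : IsSimpleOrder (LieSubmodule ℂ gh M))
    (hM' : IsSimpleOrder (LieSubmodule ℂ gh M'))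
    (Vd : Type) [AddCommGroup Vd] [Module ℂ Vd] [LieRingModule gt Vd] [LieModule ℂ gt Vd]
    (Vd' : Type) [AddCommGroup Vd'] [Module ℂ Vd'] [LieRingModule gt Vd'] [LieModule ℂ gt Vd']
    (hInd : IndModule T A M Vd) (hInd' : IndModule T A M' Vd') :
    Nonempty (Vd ≃ₗ⁅ℂ,gt⁆ Vd') ↔ Nonempty (M ≃ₗ⁅ℂ,gh⁆ M') :=
  ⟨fun ⟨G⟩ => hInd.nonempty_lieModuleEquiv_of_lieModuleEquiv hInd' G,
    fun ⟨E⟩ => ⟨hInd.lieModuleEquiv (hInd'.ofLieModuleEquiv E)⟩⟩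

/-- for irreducible `ĝ`-modules `M, M'`, the induced `t̃g`-modules
satisfy `M[d] ≅ M'[d]` iff `M ≅ M'`. -/
theorem statement16 (g : Type) [LieRing g] [LieAlgebra ℂ g] [FiniteDimensional ℂ g]
    [LieAlgebra.IsSimple ℂ g]
    (gh : Type) [LieRing gh] [LieAlgebra ℂ gh] (A : AffineAlg g gh)
    (gt : Type) [LieRing gt] [LieAlgebra ℂ gt] (T : AffineAlgD g gt)
    (M : Type) [AddCommGroup M] [Module ℂ M] [LieRingModule gh M] [LieModule ℂ gh M]
    (M' : Type) [AddCommGroup M'] [Module ℂ M'] [LieRingModule gh M'] [LieModule ℂ gh M']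
    (hM : IsSimpleOrder (LieSubmodule ℂ gh M))
    (hM' : IsSimpleOrder (LieSubmodule ℂ gh M'))
    (Vd : Type) [AddCommGroup Vd] [Module ℂ Vd] [LieRingModule gt Vd] [LieModule ℂ gt Vd]
    (Vd' : Type) [AddCommGroup Vd'] [Module ℂ Vd'] [LieRingModule gt Vd'] [LieModule ℂ gt Vd']
    (hInd : IndModule T A M Vd) (hInd' : IndModule T A M' Vd') :
    Nonempty (Vd ≃ₗ⁅ℂ,gt⁆ Vd') ↔ Nonempty (M ≃ₗ⁅ℂ,gh⁆ M') :=
  statement16_general g gh A gt T M M' hM hM' Vd Vd' hInd hInd'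

end AffinePaper
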